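/- Let k be a positive integer and suppose that for infinitely many primes p, every subset of ℤ/pℤ \ {0} of size k with nonzero sum admits an ordering whose partial sums are nonzero and pairwise distinct. Then in every torsion-free abelian group G, every subset A of G \ {0} of size k with ∑_{z∈A} z ≠ 0 admits an ordering of its elements whose partial sums are nonzero and pairwise distinct. -/

import Mathlib

/-- An ordering of the finite set `A` (as a list) whose partial sums are all nonzero
and pairwise distinct. -/
def IsAlspachOrdering {G : Type*} [AddCommGroup G] (A : Finset G) (l : List G) : Prop :=
  l.Nodup ∧ (∀ x, x ∈ l ↔ x ∈ A) ∧
    (∀ i : ℕ, 1 ≤ i → i ≤ l.length → (l.take i).sum ≠ 0) ∧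
    (∀ i j : ℕ, 1 ≤ i → i < j → j ≤ l.length → (l.take i).sum ≠ (l.take j).sum)

/-!
The span `M` of `A` is a finitely generated torsion-free, hence free, abelian group. Over a free
abelian group there is a homomorphism `M → ℤ` that does not vanish on the finitely many nonzero
elements `a`, `a - b` (`a ≠ b` in `A`) and `∑ A`; reducing it modulo any large enough `n` keeps
this, so it maps `A` bijectively onto a `k`-subset of `ZMod n \ {0}` with nonzero sum. An ordering
with distinct nonzero partial sums there pulls back to one of `A`, since the partial sums map to
the partial sums.
-/

open Filter

theorem Module.Projective.exists_dual_forall_mem_ne_zero {R M : Type*} [CommRing R] [IsDomain R]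
    [Infinite R] [AddCommGroup M] [Module R M] [Module.Projective R M] (s : Finset M)
    (hs : (0 : M) ∉ s) : ∃ f : Module.Dual R M, ∀ v ∈ s, f v ≠ 0 := by
  classical
  induction s using Finset.induction_on with
  | empty => exact ⟨0, by simp⟩
  | insert a s _ ih =>
    obtain ⟨f, hf⟩ := ih fun h => hs (Finset.mem_insert_of_mem h)
    obtain ⟨g, hg⟩ := Module.Projective.exists_dual_ne_zero R
      (ne_of_mem_of_not_mem (Finset.mem_insert_self a s) hs)
    have hfg : ∀ v ∈ insert a s, f v ≠ 0 ∨ g v ≠ 0 := by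
      intro v hv
      rcases Finset.mem_insert.1 hv with rfl | hv
      exacts [Or.inr hg, Or.inl (hf v hv)]
    -- `f + t • g` kills a given `v` for at most one `t`, so some `t` works for all of them.
    have hbad : {t : R | ∃ v ∈ insert a s, f v + t * g v = 0}.Finite := by
      refine (Set.Finite.biUnion (insert a s).finite_toSet fun v hv =>
        (?_ : {t : R | f v + t * g v = 0}.Subsingleton).finite).subset
        fun t ⟨v, hv, ht⟩ => Set.mem_biUnion hv ht
      intro t₁ (h₁ : f v + t₁ * g v = 0) t₂ (h₂ : f v + t₂ * g v = 0)
      have : (t₁ - t₂) * g v = 0 := by linear_combination h₁ - h₂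
      rcases mul_eq_zero.1 this with h | h
      · exact sub_eq_zero.1 h
      · rw [h, mul_zero, add_zero] at h₁
        exact ((hfg v hv).resolve_left (not_not.2 h₁) h).elim
    obtain ⟨t, ht⟩ := hbad.exists_notMem
    exact ⟨f + t • g, fun v hv h => ht ⟨v, hv, by simpa using h⟩⟩

theorem eventually_exists_addMonoidHom_zmod_forall_mem_ne_zero {M : Type*} [AddCommGroup M]
    [Module.Projective ℤ M] (s : Finset M) (hs : (0 : M) ∉ s) :
    ∀ᶠ n in atTop, ∃ φ : M →+ ZMod n, ∀ v ∈ s, φ v ≠ 0 := by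
  obtain ⟨f, hf⟩ := Module.Projective.exists_dual_forall_mem_ne_zero (R := ℤ) s hs
  refine eventually_atTop.2 ⟨s.sup (fun v => (f v).natAbs) + 1, fun n hn =>
    ⟨(Int.castAddHom (ZMod n)).comp f.toAddMonoidHom, fun v hv h => hf v hv ?_⟩⟩
  have hlt : |f v| < n := by
    rw [Int.abs_eq_natAbs]
    have := Finset.le_sup (f := fun v => (f v).natAbs) hv
    omega
  exact Int.eq_zero_of_abs_lt_dvd ((ZMod.intCast_zmod_eq_zero_iff_dvd _ _).1 h) hlt

def AlspachProperty (G : Type*) [AddCommGroup G] (k : ℕ) : Prop :=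
  ∀ A : Finset G, (0 : G) ∉ A → A.card = k → ∑ z ∈ A, z ≠ 0 →
    ∃ l : List G, IsAlspachOrdering A l

namespace IsAlspachOrdering

variable {M N : Type*} [AddCommGroup M] [AddCommGroup N] [DecidableEq N] {f : M →+ N}
  {A : Finset M} {l : List M}

theorem map (hf : Function.Injective f) (h : IsAlspachOrdering A l) :
    IsAlspachOrdering (A.image f) (l.map f) := by
  obtain ⟨hnd, hmem, hne, hdist⟩ := h
  refine ⟨hnd.map hf, fun y => by simp [hmem], fun i hi hil => ?_, fun i j hi hij hjl => ?_⟩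
  · rw [← List.map_take, ← map_list_sum, map_ne_zero_iff f hf]
    exact hne i hi (by simpa using hil)
  · rw [← List.map_take, ← List.map_take, ← map_list_sum, ← map_list_sum, hf.ne_iff]
    exact hdist i j hi hij (by simpa using hjl)

theorem of_map (hf : Set.InjOn f A) (hlA : ∀ x ∈ l, x ∈ A)
    (h : IsAlspachOrdering (A.image f) (l.map f)) : IsAlspachOrdering A l := by
  obtain ⟨hnd, hmem, hne, hdist⟩ := h
  refine ⟨hnd.of_map f, fun x => ⟨hlA x, fun hx => ?_⟩, fun i hi hil h0 => ?_,
    fun i j hi hij hjl h0 => ?_⟩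
  · obtain ⟨y, hy, hyx⟩ := List.mem_map.1 ((hmem (f x)).2 (Finset.mem_image_of_mem f hx))
    rwa [← hf (hlA y hy) hx hyx]
  · exact hne i hi (by simpa using hil) (by rw [← List.map_take, ← map_list_sum, h0, map_zero])
  · exact hdist i j hi hij (by simpa using hjl)
      (by rw [← List.map_take, ← List.map_take, ← map_list_sum, ← map_list_sum, h0])

theorem exists_of_image (hf : Set.InjOn f A) {l' : List N}
    (h : IsAlspachOrdering (A.image f) l') : ∃ l : List M, IsAlspachOrdering A l := by
  obtain ⟨l, rfl⟩ : l' ∈ Set.range (List.map fun x : A => f x) := by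
    rw [Set.range_list_map]
    intro y hy
    obtain ⟨x, hx, rfl⟩ := Finset.mem_image.1 ((h.2.1 y).1 hy)
    exact ⟨⟨x, hx⟩, rfl⟩
  refine ⟨l.map (↑), of_map hf (fun x hx => ?_) ?_⟩
  · obtain ⟨y, -, rfl⟩ := List.mem_map.1 hx
    exact y.2
  · rwa [List.map_map]

end IsAlspachOrdering

theorem AlspachProperty.of_zmod {M : Type*} [AddCommGroup M] [Module.Projective ℤ M] {k : ℕ}
    (hp : ∀ N : ℕ, ∃ n, N < n ∧ AlspachProperty (ZMod n) k) : AlspachProperty M k := by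
  classical
  intro A hA0 hcard hsum
  let D := insert (∑ z ∈ A, z) (A ∪ A.offDiag.image fun q => q.1 - q.2)
  have hD : (0 : M) ∉ D := by
    simp [D, hA0, hsum.symm, sub_eq_zero]
  obtain ⟨B, hB⟩ :=
    eventually_atTop.1 (eventually_exists_addMonoidHom_zmod_forall_mem_ne_zero D hD)
  obtain ⟨n, hn, hAn⟩ := hp B
  obtain ⟨φ, hφ⟩ := hB n hn.le
  have hinj : Set.InjOn φ A := fun a ha b hb hab => by_contra fun hne =>
    hφ (a - b) (Finset.mem_insert_of_mem (Finset.mem_union_right _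
      (Finset.mem_image.2 ⟨(a, b), Finset.mem_offDiag.2 ⟨ha, hb, hne⟩, rfl⟩)))
      (by rw [map_sub, hab, sub_self])
  obtain ⟨l', hl'⟩ := hAn (A.image φ)
    (by simpa using fun a ha =>
      hφ a (Finset.mem_insert_of_mem (Finset.mem_union_left _ ha)))
    (by rw [Finset.card_image_of_injOn hinj, hcard])
    (by rw [Finset.sum_image hinj, ← map_sum]; exact hφ _ (Finset.mem_insert_self _ _))
  exact hl'.exists_of_image hinj

theorem AlspachProperty.of_isAddTorsionFree (G : Type*) [AddCommGroup G] [IsAddTorsionFree G]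
    {k : ℕ} (hp : ∀ N : ℕ, ∃ n, N < n ∧ AlspachProperty (ZMod n) k) :
    AlspachProperty G k := by
  classical
  intro A hA0 hcard hsum
  let M := Submodule.span ℤ (A : Set G)
  have : Module.Finite ℤ M := Module.Finite.span_of_finite ℤ A.finite_toSet
  let ι : M →+ G := M.subtype.toAddMonoidHom
  have hι : Function.Injective ι := Subtype.val_injective
  obtain ⟨B, hB⟩ : ∃ B : Finset M, B.image ι = A :=
    ⟨A.subtype (· ∈ M), by
      ext x; simpa [ι] using fun hx : x ∈ A => Submodule.subset_span hx⟩
  rw [← hB] at hA0 hcard hsum ⊢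
  rw [Finset.card_image_of_injective B hι] at hcard
  rw [Finset.sum_image fun x _ y _ h => hι h, ← map_sum] at hsum
  obtain ⟨l, hl⟩ := AlspachProperty.of_zmod hp B
    (fun h => hA0 (by simpa using Finset.mem_image_of_mem ι h)) hcard
    (fun h => hsum (by rw [h, map_zero]))
  exact ⟨_, hl.map hι⟩

theorem stmt4_general (k : ℕ)
    (hp : ∀ N : ℕ, ∃ p : ℕ, N < p ∧ p.Prime ∧
      ∀ A : Finset (ZMod p), (0 : ZMod p) ∉ A → A.card = k → ∑ z ∈ A, z ≠ 0 →
        ∃ l : List (ZMod p), IsAlspachOrdering A l)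
    (G : Type*) [AddCommGroup G]
    (htf : ∀ (n : ℕ) (g : G), 0 < n → n • g = 0 → g = 0) :
    ∀ A : Finset G, (0 : G) ∉ A → A.card = k → ∑ z ∈ A, z ≠ 0 →
      ∃ l : List G, IsAlspachOrdering A l := by
  have : IsAddTorsionFree G := isAddTorsionFree_iff_not_isOfFinAddOrder.2 fun g hg hfin => by
    obtain ⟨n, hn, hng⟩ := isOfFinAddOrder_iff_nsmul_eq_zero.1 hfin
    exact hg (htf n g hn hng)
  exact AlspachProperty.of_isAddTorsionFree G fun N =>
    let ⟨p, hNp, _, hAp⟩ := hp N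
    ⟨p, hNp, hAp⟩

theorem stmt4 (k : ℕ) (hk : 0 < k)
    (hp : ∀ N : ℕ, ∃ p : ℕ, N < p ∧ p.Prime ∧
      ∀ A : Finset (ZMod p), (0 : ZMod p) ∉ A → A.card = k → ∑ z ∈ A, z ≠ 0 →
        ∃ l : List (ZMod p), IsAlspachOrdering A l)
    (G : Type*) [AddCommGroup G]
    (htf : ∀ (n : ℕ) (g : G), 0 < n → n • g = 0 → g = 0) :
    ∀ A : Finset G, (0 : G) ∉ A → A.card = k → ∑ z ∈ A, z ≠ 0 →
      ∃ l : List G, IsAlspachOrdering A l :=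
  stmt4_general k hp G htf
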